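/- arXiv:2509.14433 — 4 statements merged into one kernel-verified Lean document; each statement's English description precedes it below -/
import Mathlib

section
/- Let V ≥ 2 be a natural number with (V : ℝ) > e and let c > 0 be a real number. Let X_1, …, X_V be ℕ-valued random variables on a common probability space (not necessarily independent) such that for every index i and every natural number k, P(X_i ≥ k) ≤ (1/log V)^k. Then the probability that there exists an index i with (X_i : ℝ) ≥ (c+1) · log V / log log V is at most V^(-c). -/
open MeasureTheory

/-!
Put `L = log V` and `k = ⌈(c+1) L / log L⌉`. Then `L ^ k ≥ exp ((c+1) log V) = V ^ (c+1)`, so each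
`X i` reaches height `k` with probability at most `L ^ (-k) ≤ V ^ (-(c+1))`, and a union bound
over the `V` indices gives `V ^ (-c)`.
-/

theorem MeasureTheory.measure_iUnion_le_card_mul {α ι F : Type*} [Fintype ι]
    [FunLike F (Set α) ENNReal] [OuterMeasureClass F α] (μ : F) (s : ι → Set α) {p : ENNReal} (h : ∀ i, μ (s i) ≤ p) :
    μ (⋃ i, s i) ≤ Fintype.card ι * p :=
  calc μ (⋃ i, s i) ≤ ∑ i, μ (s i) := measure_iUnion_fintype_le μ s
    _ ≤ Fintype.card ι • p := Finset.sum_le_card_nsmul _ _ _ fun i _ ↦ h i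
    _ = Fintype.card ι * p := nsmul_eq_mul _ _

theorem Real.one_div_pow_le_rpow_neg {x b a : ℝ} {k : ℕ} (hx : 0 < x) (hb : 0 < b)
    (h : a * Real.log x ≤ k * Real.log b) : (1 / b) ^ k ≤ x ^ (-a) := by
  have hpow : x ^ a ≤ b ^ k :=
    calc x ^ a = Real.exp (a * Real.log x) := by rw [Real.rpow_def_of_pos hx, mul_comm]
      _ ≤ Real.exp (k * Real.log b) := Real.exp_le_exp.2 h
      _ = b ^ k := by rw [← Real.log_pow, Real.exp_log (pow_pos hb k)]
  rw [one_div, inv_pow, Real.rpow_neg hx.le]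
  exact inv_anti₀ (Real.rpow_pos_of_pos hx a) hpow

theorem skip_list_max_height_general
    {Ω : Type*} [MeasurableSpace Ω] (μ : Measure Ω)
    (V : ℕ) (hV : (V : ℝ) > Real.exp 1) (c : ℝ)
    (X : Fin V → Ω → ℕ)
    (hX : ∀ (i : Fin V) (k : ℕ),
      μ {ω | (k : ℕ) ≤ X i ω} ≤ ENNReal.ofReal ((1 / Real.log (V : ℝ)) ^ k)) :
    μ {ω | ∃ i : Fin V,
        (c + 1) * Real.log (V : ℝ) / Real.log (Real.log (V : ℝ)) ≤ (X i ω : ℝ)}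
      ≤ ENNReal.ofReal ((V : ℝ) ^ (-c)) := by
  set L := Real.log V
  have hV0 : (0 : ℝ) < V := (Real.exp_pos 1).trans hV
  have hL : 1 < L := by simpa using Real.log_lt_log (Real.exp_pos 1) hV
  set k := ⌈(c + 1) * L / Real.log L⌉₊
  have hk : (c + 1) * L ≤ k * Real.log L :=
    (div_le_iff₀ (Real.log_pos hL)).1 (Nat.le_ceil _)
  have hsub : {ω | ∃ i, (c + 1) * L / Real.log L ≤ (X i ω : ℝ)} ⊆ ⋃ i, {ω | k ≤ X i ω} :=
    fun ω ⟨i, hi⟩ ↦ Set.mem_iUnion.2 ⟨i, Nat.ceil_le.2 hi⟩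
  calc _ ≤ μ (⋃ i, {ω | k ≤ X i ω}) := measure_mono hsub
    _ ≤ Fintype.card (Fin V) * ENNReal.ofReal ((1 / L) ^ k) :=
      measure_iUnion_le_card_mul μ _ fun i ↦ hX i k
    _ = ENNReal.ofReal (V * (1 / L) ^ k) := by
      rw [Fintype.card_fin, ENNReal.ofReal_mul hV0.le, ENNReal.ofReal_natCast]
    _ ≤ ENNReal.ofReal (V * V ^ (-(c + 1))) := by
      gcongr
      exact Real.one_div_pow_le_rpow_neg hV0 (by linarith) hk
    _ = ENNReal.ofReal (V ^ (-c)) := by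
      rw [show -c = 1 + -(c + 1) by ring, Real.rpow_add hV0, Real.rpow_one]

/-- Let `V ≥ 2` be a natural number with `(V : ℝ) > e` and `c > 0` real. Let
`X_1, …, X_V` be ℕ-valued random variables on a common probability space (not necessarily
independent) such that `P(X_i ≥ k) ≤ (1/log V)^k` for all `i` and `k`. Then the probability
that some `i` has `(X_i : ℝ) ≥ (c+1) · log V / log log V` is at most `V^(-c)`
(the maximum height of a reduced-height skip list is `O(log V / log log V)` w.h.p.). -/
theorem skip_list_max_height
    {Ω : Type*} [MeasurableSpace Ω] (μ : Measure Ω) [IsProbabilityMeasure μ]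
    (V : ℕ) (hV2 : 2 ≤ V) (hV : (V : ℝ) > Real.exp 1) (c : ℝ) (hc : c > 0)
    (X : Fin V → Ω → ℕ)
    (hX : ∀ (i : Fin V) (k : ℕ),
      μ {ω | (k : ℕ) ≤ X i ω} ≤ ENNReal.ofReal ((1 / Real.log (V : ℝ)) ^ k)) :
    μ {ω | ∃ i : Fin V,
        (c + 1) * Real.log (V : ℝ) / Real.log (Real.log (V : ℝ)) ≤ (X i ω : ℝ)}
      ≤ ENNReal.ofReal ((V : ℝ) ^ (-c)) :=
  skip_list_max_height_general μ V hV c X hX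
end

section
/- Let n and k be natural numbers with k ≤ n and let p be a real number with 0 ≤ p ≤ 1. If Y is distributed according to the binomial distribution with n trials and success probability p, then P(Y ≤ k) ≤ C(n, k) · (1 - p)^(n - k), where C(n, k) denotes the binomial coefficient 'n choose k'. -/
/-!
For `m ≤ k ≤ n` we have `C(n, m) ≤ C(n, k) · C(k, m)`, so each term `p^m (1-p)^(n-m) C(n, m)` of the
lower tail is at most `C(n, k) (1-p)^(n-k)` times the `m`-th term of the binomial expansion of
`(p + (1 - p))^k = 1`.
-/

set_option linter.deprecated false

open Finset

theorem Nat.choose_le_choose_mul_choose {n k s : ℕ} (hsk : s ≤ k) (hkn : k ≤ n) :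
    n.choose s ≤ n.choose k * k.choose s := by
  rw [Nat.choose_mul hsk]
  exact Nat.le_mul_of_pos_right _ (Nat.choose_pos (by omega))

theorem sum_range_pow_mul_pow_mul_choose_le {R : Type*} [CommSemiring R] [PartialOrder R]
    [IsOrderedRing R] {x y : R} (hx : 0 ≤ x) (hy : 0 ≤ y) {n k : ℕ} (hkn : k ≤ n) :
    ∑ m ∈ range (k + 1), x ^ m * y ^ (n - m) * n.choose m
      ≤ y ^ (n - k) * n.choose k * (x + y) ^ k := by
  rw [add_pow, mul_sum]
  refine sum_le_sum fun m hm => ?_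
  have hmk : m ≤ k := Nat.lt_succ_iff.mp (mem_range.mp hm)
  calc x ^ m * y ^ (n - m) * n.choose m
      ≤ x ^ m * y ^ (n - m) * (n.choose k * k.choose m : ℕ) := by
        gcongr
        exact Nat.choose_le_choose_mul_choose hmk hkn
    _ = y ^ (n - k) * n.choose k * (x ^ m * y ^ (k - m) * k.choose m) := by
        rw [show n - m = (n - k) + (k - m) by omega, pow_add]
        push_cast
        ring

theorem PMF.toMeasure_binomial_setOf_val_le {p : NNReal} (h : p ≤ 1) {n k : ℕ} (hkn : k ≤ n) :
    (PMF.binomial p h n).toMeasure {y | (y : ℕ) ≤ k}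
      = ↑(∑ m ∈ range (k + 1), p ^ m * (1 - p) ^ (n - m) * n.choose m) := by
  have hset : {y : Fin (n + 1) | (y : ℕ) ≤ k} = ↑(univ.filter fun y : Fin (n + 1) => ↑y ≤ k) := by
    ext; simp
  rw [hset, PMF.toMeasure_apply_finset, sum_filter]
  simp only [PMF.binomial_apply, Fin.val_last]
  push_cast
  rw [Fin.sum_univ_eq_sum_range (fun m => if m ≤ k then
    (p : ENNReal) ^ m * (1 - p) ^ (n - m) * n.choose m else 0), ← sum_filter]
  congr 1
  ext m
  simp only [mem_filter, mem_range]
  omega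

theorem binomial_lower_tail_choose_bound_general (n k : ℕ) (hk : k ≤ n)
    (p : ℝ) (hp1 : p ≤ 1) :
    (PMF.binomial (Real.toNNReal p) (Real.toNNReal_le_one.mpr hp1) n).toMeasure
        {y | (y : ℕ) ≤ k}
      ≤ ENNReal.ofReal ((n.choose k : ℝ) * (1 - p) ^ (n - k)) := by
  set q := Real.toNNReal p
  have hq : q ≤ 1 := Real.toNNReal_le_one.mpr hp1
  have htail := sum_range_pow_mul_pow_mul_choose_le (x := q) (y := 1 - q) zero_le zero_le hk
  rw [add_tsub_cancel_of_le hq, one_pow, mul_one, mul_comm] at htail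
  calc _ = ((∑ m ∈ range (k + 1), q ^ m * (1 - q) ^ (n - m) * n.choose m : NNReal) : ENNReal) :=
        PMF.toMeasure_binomial_setOf_val_le hq hk
    _ ≤ ((n.choose k * (1 - q) ^ (n - k) : NNReal) : ENNReal) := by exact_mod_cast htail
    _ ≤ _ := by
        rw [← ENNReal.ofReal_coe_nnreal]
        refine ENNReal.ofReal_le_ofReal ?_
        push_cast [NNReal.coe_sub hq]
        gcongr
        · exact sub_nonneg.mpr (by exact_mod_cast hq)
        · exact Real.le_coe_toNNReal p

/-- Let `k ≤ n` be naturals and `0 ≤ p ≤ 1` real. If `Y` is binomially distributed with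
`n` trials and success probability `p`, then `P(Y ≤ k) ≤ C(n, k) · (1 - p)^(n - k)`. -/
theorem binomial_lower_tail_choose_bound (n k : ℕ) (hk : k ≤ n)
    (p : ℝ) (hp0 : 0 ≤ p) (hp1 : p ≤ 1) :
    (PMF.binomial (Real.toNNReal p) (Real.toNNReal_le_one.mpr hp1) n).toMeasure
        {y | (y : ℕ) ≤ k}
      ≤ ENNReal.ofReal ((n.choose k : ℝ) * (1 - p) ^ (n - k)) :=
  binomial_lower_tail_choose_bound_general n k hk p hp1
end

section
/- Let n and k be natural numbers with 1 ≤ k ≤ n and let p be a real number with 0 ≤ p ≤ 1. If Y is distributed according to the binomial distribution with n trials and success probability p, then P(Y ≤ k) ≤ (e·n/k)^k · exp(−p·(n − k)). -/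
/-!
With `q = max p 0 ≥ p`, every term `C(n,i) q^i (1-q)^(n-i)` with `i ≤ k` is at most
`C(n,i) (1-q)^(n-k) ≤ C(n,i) e^{-p(n-k)}`. The partial sum `∑_{i ≤ k} C(n,i)` is compared with
the binomial expansion of `(1+x)^n ≤ e^{nx}` at `x = k/n`:
`x^k ∑_{i ≤ k} C(n,i) ≤ ∑_i C(n,i) x^i ≤ e^k`.
-/

open Finset
open scoped NNReal ENNReal

set_option linter.deprecated false

lemma Real.one_sub_pow_le_exp_neg_mul {q : ℝ} (hq : q ≤ 1) (m : ℕ) :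
    (1 - q) ^ m ≤ Real.exp (-(q * m)) := calc
  (1 - q) ^ m ≤ Real.exp (-q) ^ m :=
    pow_le_pow_left₀ (sub_nonneg.2 hq) (Real.one_sub_le_exp_neg q) m
  _ = Real.exp (-(q * m)) := by rw [← Real.exp_nat_mul]; ring_nf

lemma pow_mul_sum_range_choose_le_exp {x : ℝ} (hx0 : 0 ≤ x) (hx1 : x ≤ 1) {n k : ℕ}
    (hkn : k ≤ n) :
    x ^ k * ∑ i ∈ range (k + 1), (n.choose i : ℝ) ≤ Real.exp (n * x) := calc
  x ^ k * ∑ i ∈ range (k + 1), (n.choose i : ℝ)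
      ≤ ∑ i ∈ range (k + 1), x ^ i * 1 ^ (n - i) * (n.choose i : ℝ) := by
    rw [mul_sum]
    gcongr with i hi
    rw [one_pow, mul_one]
    exact pow_le_pow_of_le_one hx0 hx1 (Nat.lt_succ_iff.1 (mem_range.1 hi))
  _ ≤ ∑ i ∈ range (n + 1), x ^ i * 1 ^ (n - i) * (n.choose i : ℝ) :=
    sum_le_sum_of_subset_of_nonneg (range_subset_range.2 (by omega)) fun _ _ _ ↦ by positivity
  _ = (x + 1) ^ n := (add_pow x 1 n).symm
  _ ≤ Real.exp x ^ n := by gcongr; exact Real.add_one_le_exp x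
  _ = Real.exp (n * x) := (Real.exp_nat_mul x n).symm

lemma sum_range_choose_le_exp_mul_div_pow {n k : ℕ} (hkn : k ≤ n) :
    ∑ i ∈ range (k + 1), (n.choose i : ℝ) ≤ (Real.exp 1 * n / k) ^ k := by
  obtain rfl | hk := k.eq_zero_or_pos
  · simp
  have hn : (0 : ℝ) < n := by exact_mod_cast hk.trans_le hkn
  have hx : (0 : ℝ) < k / n := by positivity
  have key := pow_mul_sum_range_choose_le_exp hx.le
    (div_le_one_of_le₀ (by exact_mod_cast hkn) hn.le) hkn
  rw [mul_div_cancel₀ _ hn.ne', ← Real.exp_one_pow] at key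
  calc ∑ i ∈ range (k + 1), (n.choose i : ℝ) ≤ Real.exp 1 ^ k / (k / n) ^ k := by
        rw [le_div_iff₀ (by positivity)]; linarith
    _ = (Real.exp 1 * n / k) ^ k := by rw [← div_pow]; field_simp

lemma PMF.binomial_apply_le_of_le {q : ℝ≥0} (hq : q ≤ 1) {n k : ℕ} {y : Fin (n + 1)}
    (hy : (y : ℕ) ≤ k) :
    PMF.binomial q hq n y ≤ ↑((n.choose y : ℝ≥0) * (1 - q) ^ (n - k)) := by
  rw [PMF.binomial_apply, Fin.val_last]
  norm_cast
  calc q ^ (y : ℕ) * (1 - q) ^ (n - y) * (n.choose y : ℝ≥0)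
      ≤ 1 * (1 - q) ^ (n - k) * (n.choose y : ℝ≥0) := by
        gcongr ?_ * ?_ * _
        · exact pow_le_one₀ zero_le hq
        · exact pow_le_pow_of_le_one zero_le tsub_le_self (by omega)
    _ = _ := by ring

lemma PMF.binomial_toMeasure_le (q : ℝ≥0) (hq : q ≤ 1) (n k : ℕ) :
    (PMF.binomial q hq n).toMeasure {y | (y : ℕ) ≤ k}
      ≤ ↑((∑ i ∈ range (k + 1), (n.choose i : ℝ≥0)) * (1 - q) ^ (n - k)) := by
  set f : ℕ → ℝ≥0 := fun i ↦ if i ≤ k then (n.choose i : ℝ≥0) else 0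
  have hf : ∑ i ∈ range (n + 1), f i ≤ ∑ i ∈ range (k + 1), (n.choose i : ℝ≥0) := by
    rw [← sum_filter]
    refine sum_le_sum_of_subset fun i hi ↦ ?_
    simp only [mem_filter, mem_range] at hi ⊢
    omega
  rw [PMF.toMeasure_apply_fintype]
  calc ∑ y, {y : Fin (n + 1) | (y : ℕ) ≤ k}.indicator (PMF.binomial q hq n) y
      ≤ ∑ y : Fin (n + 1), ((f y * (1 - q) ^ (n - k) : ℝ≥0) : ℝ≥0∞) := by
        gcongr with y
        by_cases hy : (y : ℕ) ≤ k
        · simpa [f, hy] using PMF.binomial_apply_le_of_le hq hy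
        · simp [f, hy]
    _ = ↑((∑ i ∈ range (n + 1), f i) * (1 - q) ^ (n - k)) := by
        rw [← Fin.sum_univ_eq_sum_range f, sum_mul]
        push_cast
        rfl
    _ ≤ _ := by gcongr

theorem binomial_lower_tail_exp_bound_general (n k : ℕ) (hkn : k ≤ n)
    (p : ℝ) (hp1 : p ≤ 1) :
    (PMF.binomial (Real.toNNReal p) (Real.toNNReal_le_one.mpr hp1) n).toMeasure
        {y | (y : ℕ) ≤ k}
      ≤ ENNReal.ofReal ((Real.exp 1 * n / k) ^ k * Real.exp (-(p * ((n : ℝ) - k)))) := by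
  refine (PMF.binomial_toMeasure_le _ _ n k).trans ?_
  rw [← ENNReal.ofReal_coe_nnreal]
  refine ENNReal.ofReal_le_ofReal ?_
  have hq1 : (p.toNNReal : ℝ) ≤ 1 := by exact_mod_cast Real.toNNReal_le_one.mpr hp1
  push_cast [NNReal.coe_sub (Real.toNNReal_le_one.mpr hp1)]
  gcongr
  · exact sum_range_choose_le_exp_mul_div_pow hkn
  · calc (1 - (p.toNNReal : ℝ)) ^ (n - k) ≤ Real.exp (-(p.toNNReal * (n - k : ℕ))) :=
          Real.one_sub_pow_le_exp_neg_mul hq1 _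
      _ ≤ Real.exp (-(p * ((n : ℝ) - k))) := by
          rw [Nat.cast_sub hkn]
          gcongr
          · exact sub_nonneg.2 (by exact_mod_cast hkn)
          · exact Real.le_coe_toNNReal p

/-- Let `1 ≤ k ≤ n` be naturals and `0 ≤ p ≤ 1` real. If `Y` is binomially distributed with
`n` trials and success probability `p`, then `P(Y ≤ k) ≤ (e·n/k)^k · exp(−p·(n − k))`. -/
theorem binomial_lower_tail_exp_bound (n k : ℕ) (hk1 : 1 ≤ k) (hkn : k ≤ n)
    (p : ℝ) (hp0 : 0 ≤ p) (hp1 : p ≤ 1) :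
    (PMF.binomial (Real.toNNReal p) (Real.toNNReal_le_one.mpr hp1) n).toMeasure
        {y | (y : ℕ) ≤ k}
      ≤ ENNReal.ofReal ((Real.exp 1 * n / k) ^ k * Real.exp (-(p * ((n : ℝ) - k)))) :=
  binomial_lower_tail_exp_bound_general n k hkn p hp1
end

section
/- For every real number c ≥ 1 there exists a threshold V₀ > e such that for all real V ≥ V₀ the following holds: let n = ⌈6c · (log V)²⌉ and let Y be distributed according to the binomial distribution with n trials and success probability p = 1/log V. Then P((Y : ℝ) ≤ c · log V / log log V) ≤ V^(−c). Equivalently, in 6c·log² V flips of a coin with heads probability 1/log V, there are at least c · log V / log log V heads with probability at least 1 − V^(−c). -/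
/-!
With `L = log V`, `p = 1 / L` and `k = ⌊c L / log L⌋`, each of the at most `k + 1` outcomes
`y ≤ k` has probability `C(n, y) p^y (1 - p)^(n - y) ≤ (n p)^k (1 - p)^(n - k)`, because
`n p ≥ 1`. Once `L ≥ 7c`, `n p ≤ L²`, so `(n p)^k ≤ e^{2 k log L} ≤ e^{2cL}`, while
`(1 - p)^(n - k) ≤ e^{-p (n - k)} ≤ e^{c - 6cL}`; together with `k + 1 ≤ e^{cL}` the product
is at most `e^{-cL} = V^{-c}`.
-/

set_option linter.deprecated false

open Real Finset

open scoped NNReal ENNReal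

namespace PMF

variable {p : ℝ≥0} {h : p ≤ 1} {n : ℕ}

theorem binomial_apply_le_mul_pow (x : Fin (n + 1)) :
    binomial p h n x ≤ (n * p) ^ (x : ℕ) * (1 - p) ^ (n - x) := by
  have hchoose : ((n.choose x : ℕ) : ℝ≥0∞) ≤ (n : ℝ≥0∞) ^ (x : ℕ) := by
    exact_mod_cast Nat.choose_le_pow n x
  calc binomial p h n x = p ^ (x : ℕ) * (1 - p) ^ (n - x) * (n.choose x : ℕ) := by
        rw [binomial_apply, Fin.val_last]
    _ ≤ p ^ (x : ℕ) * (1 - p) ^ (n - x) * (n : ℝ≥0∞) ^ (x : ℕ) := by gcongr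
    _ = (n * p) ^ (x : ℕ) * (1 - p) ^ (n - x) := by ring

theorem binomial_apply_le_of_val_le (hnp : 1 ≤ (n * p : ℝ≥0∞)) {k : ℕ} {x : Fin (n + 1)}
    (hx : (x : ℕ) ≤ k) : binomial p h n x ≤ (n * p) ^ k * (1 - p) ^ (n - k) :=
  (binomial_apply_le_mul_pow x).trans <| mul_le_mul' (pow_le_pow_right₀ hnp hx)
    (pow_le_pow_right_of_le_one' tsub_le_self (Nat.sub_le_sub_left hx n))

theorem binomial_toMeasure_setOf_val_le_le (hnp : 1 ≤ (n * p : ℝ)) (k : ℕ) :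
    (binomial p h n).toMeasure {y | (y : ℕ) ≤ k} ≤
      ENNReal.ofReal ((k + 1) * ((n * p) ^ k * (1 - p) ^ (n - k))) := by
  classical
  have hnp' : 1 ≤ (n * p : ℝ≥0∞) := by exact_mod_cast hnp
  have hcard : #{y : Fin (n + 1) | (y : ℕ) ≤ k} ≤ k + 1 := by
    simpa using Finset.card_le_card_of_injOn (t := range (k + 1)) Fin.val
      (fun y hy => by simpa [Nat.lt_succ_iff] using hy) Fin.val_injective.injOn
  have hofReal : ENNReal.ofReal ((k + 1) * ((n * p) ^ k * (1 - p) ^ (n - k))) =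
      (k + 1) * ((n * p) ^ k * (1 - p) ^ (n - k)) := by
    rw [← NNReal.coe_one, ← NNReal.coe_sub h]
    norm_cast
    rw [ENNReal.ofReal_coe_nnreal]
  calc (binomial p h n).toMeasure {y | (y : ℕ) ≤ k}
      = ∑ y ∈ {y : Fin (n + 1) | (y : ℕ) ≤ k}, binomial p h n y := by
        rw [← toMeasure_apply_finset, coe_filter]; simp only [mem_univ, true_and]
    _ ≤ #{y : Fin (n + 1) | (y : ℕ) ≤ k} • ((n * p) ^ k * (1 - p) ^ (n - k)) :=
        sum_le_card_nsmul _ _ _ fun y hy => binomial_apply_le_of_val_le hnp' (by simpa using hy)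
    _ ≤ (k + 1) * ((n * p) ^ k * (1 - p) ^ (n - k)) := by
        rw [nsmul_eq_mul]; gcongr; exact_mod_cast hcard
    _ = _ := hofReal.symm

end PMF

theorem succ_mul_pow_mul_one_sub_pow_le_exp {c L : ℝ} (hc : 1 ≤ c) (hL : exp 2 + 7 * c ≤ L)
    {n k : ℕ} (hn : 6 * c * L ^ 2 ≤ n) (hn' : (n : ℝ) ≤ 6 * c * L ^ 2 + 1)
    (hk : (k : ℝ) ≤ c * L / log L) :
    (k + 1) * ((n * (1 / L)) ^ k * (1 - 1 / L) ^ (n - k)) ≤ exp (-(c * L)) := by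
  have hL7 : 7 ≤ L := by linarith [add_one_le_exp 2]
  have h7c : 7 * c ≤ L := by linarith [exp_pos 2]
  have hL0 : 0 < L := by linarith
  have hlogL : 2 ≤ log L := (le_log_iff_exp_le hL0).2 (by linarith)
  have hkL : k * log L ≤ c * L := (le_div_iff₀ (by linarith)).1 hk
  have hk2 : 2 * k ≤ c * L := by nlinarith [(k.cast_nonneg : (0 : ℝ) ≤ k)]
  have hkn : k ≤ n := by exact_mod_cast (show (k : ℝ) ≤ n by nlinarith)
  have hq : 0 ≤ 1 - 1 / L := by rw [sub_nonneg, div_le_one hL0]; linarith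
  have hsucc : (k : ℝ) + 1 ≤ exp (c * L) := by linarith [add_one_le_exp (c * L)]
  have hpow : (n * (1 / L)) ^ k ≤ exp (2 * c * L) := by
    have hnL : n * (1 / L) ≤ L ^ 2 := by
      rw [mul_one_div, div_le_iff₀ hL0]
      nlinarith [mul_le_mul_of_nonneg_right h7c (sq_nonneg L)]
    calc (n * (1 / L)) ^ k ≤ (L ^ 2) ^ k := by gcongr
      _ = exp (2 * k * log L) := by
        rw [← pow_mul, ← exp_log (pow_pos hL0 (2 * k)), log_pow]; push_cast; ring_nf
      _ ≤ exp (2 * c * L) := exp_le_exp.2 (by linarith)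
  have hone_sub : (1 - 1 / L) ^ (n - k) ≤ exp (c - 6 * c * L) := by
    calc (1 - 1 / L) ^ (n - k) ≤ exp (-(1 / L)) ^ (n - k) := by
          gcongr; linarith [add_one_le_exp (-(1 / L))]
      _ = exp (-((n - k) / L)) := by
        rw [← exp_nat_mul, Nat.cast_sub hkn]; ring_nf
      _ ≤ exp (c - 6 * c * L) := by
        gcongr
        rw [neg_le, neg_sub, le_div_iff₀ hL0]; nlinarith
  calc (k + 1) * ((n * (1 / L)) ^ k * (1 - 1 / L) ^ (n - k))
      ≤ exp (c * L) * (exp (2 * c * L) * exp (c - 6 * c * L)) := by gcongr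
    _ = exp (c - 3 * c * L) := by rw [← exp_add, ← exp_add]; ring_nf
    _ ≤ exp (-(c * L)) := by gcongr; nlinarith

/-- For every real `c ≥ 1` there is a threshold `V₀ > e` such that for all `V ≥ V₀`:
if `Y` is binomial with `n = ⌈6c · (log V)²⌉` trials and success probability `p = 1/log V`,
then `P((Y : ℝ) ≤ c · log V / log log V) ≤ V^(−c)`. Equivalently, in `6c·log² V` flips of a
coin with heads probability `1/log V`, there are at least `c · log V / log log V` heads with
probability at least `1 − V^(−c)`. -/
theorem coin_flip_lemma (c : ℝ) (hc : 1 ≤ c) :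
    ∃ V₀ : ℝ, V₀ > Real.exp 1 ∧ ∀ V : ℝ, V₀ ≤ V →
      ∀ h : Real.toNNReal (1 / Real.log V) ≤ 1,
        (PMF.binomial (Real.toNNReal (1 / Real.log V)) h
              ⌈6 * c * Real.log V ^ 2⌉₊).toMeasure
            {y | ((y : ℕ) : ℝ) ≤ c * Real.log V / Real.log (Real.log V)}
          ≤ ENNReal.ofReal (V ^ (-c)) := by
  refine ⟨exp (exp 2 + 7 * c), exp_lt_exp.2 (by linarith [add_one_le_exp 2]), fun V hV h => ?_⟩
  have hV0 : 0 < V := (exp_pos _).trans_le hV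
  set L := log V
  have hL : exp 2 + 7 * c ≤ L := (le_log_iff_exp_le hV0).2 hV
  have hL1 : 1 ≤ L := by linarith [add_one_le_exp 2]
  have hp : ((1 / L).toNNReal : ℝ) = 1 / L := coe_toNNReal _ (by positivity)
  set n := ⌈6 * c * L ^ 2⌉₊
  set k := ⌊c * L / log L⌋₊
  have hn : 6 * c * L ^ 2 ≤ n := Nat.le_ceil _
  have hk : (k : ℝ) ≤ c * L / log L :=
    Nat.floor_le (div_nonneg (by positivity) (log_nonneg hL1))
  have hnp : 1 ≤ (n : ℝ) * (1 / L).toNNReal := by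
    rw [hp, mul_one_div, le_div_iff₀ (by positivity)]; nlinarith
  calc (PMF.binomial (1 / L).toNNReal h n).toMeasure {y | ((y : ℕ) : ℝ) ≤ c * L / log L}
      ≤ (PMF.binomial (1 / L).toNNReal h n).toMeasure {y | (y : ℕ) ≤ k} :=
        MeasureTheory.measure_mono fun y hy => Nat.le_floor hy
    _ ≤ _ := PMF.binomial_toMeasure_setOf_val_le_le hnp k
    _ ≤ ENNReal.ofReal (V ^ (-c)) := by
        rw [hp, rpow_def_of_pos hV0, mul_neg, mul_comm (log V) c]
        exact ENNReal.ofReal_le_ofReal <| succ_mul_pow_mul_one_sub_pow_le_exp hc hL hn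
          (Nat.ceil_lt_add_one (by positivity)).le hk
end
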